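/- arXiv:1112.2735 — 6 statements merged into one kernel-verified Lean document; each statement's English description precedes it below -/
import Mathlib

section
/- For every integer a, the identity (F_{a+2} + δ²)(F_{a+1} + δ²) - (F_{a-1} + δ²)(F_{a-2} + δ²) = (-A⁻⁴)^{a-3} · F_6 · F_a holds in the field ℚ(A). -/
/-- The variable `A`, a transcendental generator of the field ℚ(A) of rational
functions in one variable over ℚ. -/
noncomputable def A : RatFunc ℚ := RatFunc.X

/-- `δ = -A² - A⁻²` in ℚ(A). -/
noncomputable def δ : RatFunc ℚ := -A ^ 2 - A ^ (-2 : ℤ)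

/-- `F n = (-A⁻⁴)ⁿ - 1` in ℚ(A), for an integer `n`. -/
noncomputable def F (n : ℤ) : RatFunc ℚ := (-A ^ (-4 : ℤ)) ^ n - 1

theorem lemma_3_1 (a : ℤ) :
    (F (a + 2) + δ ^ 2) * (F (a + 1) + δ ^ 2)
      - (F (a - 1) + δ ^ 2) * (F (a - 2) + δ ^ 2)
      = (-A ^ (-4 : ℤ)) ^ (a - 3) * F 6 * F a := by
  have hA : A ≠ 0 := RatFunc.X_ne_zero
  have hu : (-A ^ (-4 : ℤ)) ≠ 0 := by simp [zpow_ne_zero, hA]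
  have hw : (-A ^ (-4 : ℤ)) ^ a ≠ 0 := zpow_ne_zero _ hu
  simp only [F, δ]
  rw [zpow_add₀ hu, zpow_add₀ hu, zpow_sub₀ hu, zpow_sub₀ hu, zpow_sub₀ hu]
  set w := (-A ^ (-4 : ℤ)) ^ a with hwdef
  simp only [zpow_neg, zpow_ofNat, zpow_one]
  field_simp
  ring
end

section
/- For every integer k, the identity (F_{k+4} + δ²)(F_{k+3} + δ²)(F_{k+5} + δ²) + (-A⁻⁴)^k·(δ² - 1)·F_{k+4}·F_{k+3}·F_{k+5} = (F_{k+2} + δ²)(F_{k+1} + δ²)(F_{k+3} + δ²) + (-A⁻⁴)^{k+6}·(δ² - 1)·F_{k+2}·F_{k+1}·F_{k+3} holds in the field ℚ(A). -/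
set_option maxHeartbeats 2000000


theorem core_identity (k : ℤ) :
    (F (k + 4) + δ ^ 2) * (F (k + 3) + δ ^ 2) * (F (k + 5) + δ ^ 2)
        + (-A ^ (-4 : ℤ)) ^ k * (δ ^ 2 - 1) * F (k + 4) * F (k + 3) * F (k + 5)
      = (F (k + 2) + δ ^ 2) * (F (k + 1) + δ ^ 2) * (F (k + 3) + δ ^ 2)
        + (-A ^ (-4 : ℤ)) ^ (k + 6) * (δ ^ 2 - 1) * F (k + 2) * F (k + 1) * F (k + 3) := by
  have hA : A ≠ 0 := RatFunc.X_ne_zero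
  have hb : (-A ^ (-4 : ℤ)) ≠ 0 := neg_ne_zero.mpr (zpow_ne_zero _ hA)
  simp only [F, δ, zpow_add₀ hb]
  set x := (-A ^ (-4 : ℤ)) ^ k with hx
  have h1 : (-A ^ (-4 : ℤ)) ^ (1:ℤ) = -A ^ (-4 : ℤ) := zpow_one _
  have h2 : (-A ^ (-4 : ℤ)) ^ (2:ℤ) = (-A ^ (-4 : ℤ))^(2:ℕ) := by norm_cast
  have h3 : (-A ^ (-4 : ℤ)) ^ (3:ℤ) = (-A ^ (-4 : ℤ))^(3:ℕ) := by norm_cast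
  have h4 : (-A ^ (-4 : ℤ)) ^ (4:ℤ) = (-A ^ (-4 : ℤ))^(4:ℕ) := by norm_cast
  have h5 : (-A ^ (-4 : ℤ)) ^ (5:ℤ) = (-A ^ (-4 : ℤ))^(5:ℕ) := by norm_cast
  have h6 : (-A ^ (-4 : ℤ)) ^ (6:ℤ) = (-A ^ (-4 : ℤ))^(6:ℕ) := by norm_cast
  have hd : A ^ (-4 : ℤ) = (A ^ (-2 : ℤ)) ^ (2:ℕ) := by
    rw [← zpow_natCast (A ^ (-2 : ℤ)) 2, ← zpow_mul]; norm_num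
  rw [h1, h2, h3, h4, h5, h6, hd]
  have e2 : A ^ (-2 : ℤ) * A ^ 2 = 1 := by
    rw [show (A:RatFunc ℚ) ^ 2 = A ^ (2:ℤ) by norm_cast, ← zpow_add₀ hA]; norm_num
  generalize A ^ (-2 : ℤ) = b at *
  generalize (A : RatFunc ℚ) ^ 2 = c at *
  linear_combination
    (-1*x + c^2*x + b*c*x + b*c^3*x + 3*b^2*c^2*x + 4*b^3*c*x + -1*b^3*c^3*x
      + 3*b^4*x + -4*b^4*c^2*x + -5*b^5*c*x + -3*b^6*x + b^6*c^2*x + b^7*c*x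
      + b^7*c^3*x + 3*b^8*c^2*x + 4*b^9*c*x + -1*b^9*c^3*x + 3*b^10*x
      + -4*b^10*c^2*x + -5*b^11*c*x + -2*b^12*x + b^12*x^3 + b^13*c*x^3
      + b^14*x^3 + -1*b^15*c*x^3 + -2*b^16*x^3 + b^18*x^3 + b^19*c*x^3
      + b^20*x^3 + -1*b^21*c*x^3 + -2*b^22*x^3) * e2
end

section
/- Let a, b, c be positive integers and m a non-negative even integer. Then ∑_{i=0}^{m} ∑_{j=1}^{a} C(m,i)·C(a,j) · A^{m+a+b+c-2(i+j)} · δ^{m-i+j} + ∑_{i=0}^{m} ∑_{k=1}^{b} C(m,i)·C(b,k) · A^{m+a+b+c-2(i+k)} · δ^{m-i+k} + ∑_{i=0}^{m} ∑_{l=1}^{c} C(m,i)·C(c,l) · A^{m+a+b+c-2(i+l)} · δ^{m-i+l} = A^{3m+a+b+c} · (F_a + F_b + F_c) in the field ℚ(A), where C(n,r) denotes the binomial coefficient. (This is the contribution to the Kauffman bracket state sum of the pretzel diagram D(m; a, b, c) from states in which exactly one of the three twisted bands has a crossing nullified negatively.) -/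
lemma hA : A ≠ 0 := RatFunc.X_ne_zero

lemma hδ : δ ≠ 0 := by
  intro h
  have h2 : δ * A ^ 2 = -(A ^ 4 + 1) := by
    rw [δ]
    rw [show (-2 : ℤ) = -(2:ℕ) by norm_num, zpow_neg, zpow_natCast]
    ring_nf
    rw [mul_comm (A^2) (A⁻¹^2), ← mul_pow, inv_mul_cancel₀ hA]
    ring
  rw [h, zero_mul] at h2
  have h3 : (A : RatFunc ℚ) ^ 4 + 1 = 0 := by linear_combination h2
  have h4 : (algebraMap (Polynomial ℚ) (RatFunc ℚ)) (Polynomial.X ^ 4 + 1) = 0 := by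
    rw [map_add, map_pow, map_one, RatFunc.algebraMap_X]
    simpa [A] using h3
  have h5 : (Polynomial.X ^ 4 + 1 : Polynomial ℚ) = 0 :=
    IsFractionRing.injective (Polynomial ℚ) (RatFunc ℚ) (by simpa using h4)
  have := congrArg (Polynomial.eval 0) h5
  simp at this

lemma zA2 : A ^ (-2 : ℤ) = (A⁻¹) ^ 2 := by
  rw [show (-2 : ℤ) = -(2:ℕ) by norm_num, zpow_neg, zpow_natCast, inv_pow]

lemma valI : A⁻¹ + A * δ = -A ^ 3 := by
  have h : A * A⁻¹ = 1 := mul_inv_cancel₀ hA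
  rw [δ, zA2]
  linear_combination -A⁻¹ * h

lemma valJ : A⁻¹ * δ + A = -(A⁻¹) ^ 3 := by
  have h : A * A⁻¹ = 1 := mul_inv_cancel₀ hA
  rw [δ, zA2]
  linear_combination -A * h

open Finset in
lemma sumI (m : ℕ) :
    ∑ i ∈ range (m + 1), (m.choose i : RatFunc ℚ) * ((A * δ) ^ (m - i) * A⁻¹ ^ i)
      = (A⁻¹ + A * δ) ^ m := by
  rw [add_pow]
  exact sum_congr rfl fun i _ => by ring

open Finset in
lemma sumJ (n : ℕ) :
    ∑ j ∈ Icc 1 n, (n.choose j : RatFunc ℚ) * ((A⁻¹ * δ) ^ j * A ^ (n - j))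
      = (A⁻¹ * δ + A) ^ n - A ^ n := by
  have hr : range (n + 1) = insert 0 (Icc 1 n) := by
    ext x; simp; omega
  rw [add_pow, hr, sum_insert (by simp)]
  simp only [pow_zero, Nat.choose_zero_right, Nat.sub_zero, Nat.cast_one, one_mul, mul_one]
  rw [add_comm, add_sub_assoc, sub_self, add_zero]
  exact sum_congr rfl fun j _ => by ring

open Finset in
lemma block (m n p : ℕ) (q : ℤ) (hq : q = m + n + p) :
    ∑ i ∈ range (m + 1), ∑ j ∈ Icc 1 n,
        (m.choose i : RatFunc ℚ) * (n.choose j : RatFunc ℚ) *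
          A ^ (q - 2 * ((i : ℤ) + j)) * δ ^ ((m : ℤ) - i + j)
      = A ^ p * ((A⁻¹ + A * δ) ^ m * ((A⁻¹ * δ + A) ^ n - A ^ n)) := by
  have step : ∀ i ∈ range (m + 1), ∀ j ∈ Icc 1 n,
      (m.choose i : RatFunc ℚ) * (n.choose j : RatFunc ℚ) *
          A ^ (q - 2 * ((i : ℤ) + j)) * δ ^ ((m : ℤ) - i + j)
      = A ^ p * (((m.choose i : RatFunc ℚ) * ((A * δ) ^ (m - i) * A⁻¹ ^ i)) *
          ((n.choose j : RatFunc ℚ) * ((A⁻¹ * δ) ^ j * A ^ (n - j)))) := by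
    intro i hi j hj
    simp only [mem_range, mem_Icc] at hi hj
    have hi' : i ≤ m := by omega
    have hj' : j ≤ n := hj.2
    have e1 : q - 2 * ((i : ℤ) + j)
        = ((m - i : ℕ) : ℤ) + (-(i : ℤ)) + (-(j : ℤ)) + ((n - j : ℕ) : ℤ) + (p : ℤ) := by
      rw [hq]; push_cast [Nat.cast_sub hi', Nat.cast_sub hj']; ring
    have e2 : (m : ℤ) - i + j = (((m - i) + j : ℕ) : ℤ) := by
      push_cast [Nat.cast_sub hi']; ring
    rw [e1, e2, zpow_add₀ hA, zpow_add₀ hA, zpow_add₀ hA, zpow_add₀ hA,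
      zpow_natCast, zpow_natCast, zpow_natCast, zpow_neg, zpow_neg,
      zpow_natCast, zpow_natCast, zpow_natCast, ← inv_pow, ← inv_pow,
      pow_add, mul_pow, mul_pow]
    ring
  rw [sum_congr rfl fun i hi => sum_congr rfl fun j hj => step i hi j hj]
  simp only [← mul_sum]
  rw [← sum_mul, sumI, sumJ]

lemma zA4 : A ^ (-4 : ℤ) = (A⁻¹) ^ 4 := by
  rw [show (-4 : ℤ) = -(4:ℕ) by norm_num, zpow_neg, zpow_natCast, inv_pow]

lemma Fnat (n : ℕ) : F n = (-(A⁻¹) ^ 4) ^ n - 1 := by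
  rw [F, zA4, zpow_natCast]

lemma keypow (n : ℕ) : (-(A⁻¹) ^ 3) ^ n = A ^ n * (-(A⁻¹) ^ 4) ^ n := by
  rw [← mul_pow]
  congr 1
  have h : A * A⁻¹ = 1 := mul_inv_cancel₀ hA
  linear_combination (A⁻¹)^3 * h

theorem X1_contribution (a b c : ℕ) (ha : 0 < a) (hb : 0 < b) (hc : 0 < c)
    (m : ℕ) (hm : Even m) :
    (∑ i ∈ Finset.range (m + 1), ∑ j ∈ Finset.Icc 1 a,
        (m.choose i : RatFunc ℚ) * (a.choose j : RatFunc ℚ) *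
          A ^ ((m : ℤ) + a + b + c - 2 * ((i : ℤ) + j)) * δ ^ ((m : ℤ) - i + j))
      + (∑ i ∈ Finset.range (m + 1), ∑ k ∈ Finset.Icc 1 b,
        (m.choose i : RatFunc ℚ) * (b.choose k : RatFunc ℚ) *
          A ^ ((m : ℤ) + a + b + c - 2 * ((i : ℤ) + k)) * δ ^ ((m : ℤ) - i + k))
      + (∑ i ∈ Finset.range (m + 1), ∑ l ∈ Finset.Icc 1 c,
        (m.choose i : RatFunc ℚ) * (c.choose l : RatFunc ℚ) *
          A ^ ((m : ℤ) + a + b + c - 2 * ((i : ℤ) + l)) * δ ^ ((m : ℤ) - i + l))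
      = A ^ (3 * (m : ℤ) + a + b + c) * (F a + F b + F c) := by
  rw [block m a (b + c) _ (by push_cast; try ring),
      block m b (a + c) _ (by push_cast; try ring),
      block m c (a + b) _ (by push_cast; try ring),
      valI, valJ]
  have hI : (-A ^ 3) ^ m = A ^ (3 * m) := by
    rw [hm.neg_pow, ← pow_mul, mul_comm]
  have hz : A ^ (3 * (m : ℤ) + a + b + c) = A ^ (3 * m + a + b + c : ℕ) := by
    rw [← zpow_natCast]
    congr 1
  rw [hI, hz, Fnat, Fnat, Fnat, keypow a, keypow b, keypow c]
  ring
end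

section
/- Let a, b, c be positive integers and m a non-negative even integer. Then ∑_{i=0}^{m} ∑_{j=1}^{a} ∑_{k=1}^{b} C(m,i)·C(a,j)·C(b,k) · A^{m+a+b+c-2(i+j+k)} · δ^{m-i+j+k-2} = A^{3m+a+b+c} · δ⁻² · F_a · F_b in the field ℚ(A), where C(n,r) denotes the binomial coefficient. -/
lemma key0 : A ^ (-2:ℤ) + δ = -A^2 := by unfold δ; ring

lemma hw : 1 + A^(-2:ℤ) * δ = -A^(-4:ℤ) := by
  unfold δ
  rw [zpow_neg, zpow_neg, show ((2:ℤ))=((2:ℕ):ℤ) from rfl,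
    show ((4:ℤ))=((4:ℕ):ℤ) from rfl, zpow_natCast, zpow_natCast]
  field_simp [hA]
  ring

lemma sumf (m : ℕ) (hm : Even m) :
    ∑ i ∈ Finset.range (m+1), (m.choose i : RatFunc ℚ) * (A^(-2:ℤ))^i * δ^(m-i)
      = A^(2*m) := by
  calc ∑ i ∈ Finset.range (m+1), (m.choose i : RatFunc ℚ) * (A^(-2:ℤ))^i * δ^(m-i)
      = (A^(-2:ℤ) + δ)^m := by
        rw [add_pow]
        exact Finset.sum_congr rfl (fun i _ => by ring)
    _ = A^(2*m) := by rw [key0, hm.neg_pow, ← pow_mul]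

lemma sumg (a : ℕ) :
    ∑ j ∈ Finset.Icc 1 a, (a.choose j : RatFunc ℚ) * (A^(-2:ℤ)*δ)^j = F a := by
  have hins : Finset.range (a+1) = insert 0 (Finset.Icc 1 a) := by
    ext x; simp [Nat.lt_succ_iff]; omega
  have h1 : (A^(-2:ℤ)*δ + 1)^a
      = ∑ j ∈ Finset.range (a+1), (a.choose j : RatFunc ℚ) * (A^(-2:ℤ)*δ)^j := by
    rw [add_pow]
    exact Finset.sum_congr rfl (fun j _ => by ring)
  rw [hins, Finset.sum_insert (by simp)] at h1
  have h2 : ∑ j ∈ Finset.Icc 1 a, (a.choose j : RatFunc ℚ) * (A^(-2:ℤ)*δ)^j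
      = (A^(-2:ℤ)*δ + 1)^a - 1 := by
    rw [h1]; simp
  rw [h2, show A^(-2:ℤ)*δ + 1 = -A^(-4:ℤ) by rw [← hw]; ring]
  rw [F, ← zpow_natCast (-A^(-4:ℤ)) a]

theorem X21_contribution (a b c : ℕ) (ha : 0 < a) (hb : 0 < b) (hc : 0 < c)
    (m : ℕ) (hm : Even m) :
    ∑ i ∈ Finset.range (m + 1), ∑ j ∈ Finset.Icc 1 a, ∑ k ∈ Finset.Icc 1 b,
        (m.choose i : RatFunc ℚ) * (a.choose j : RatFunc ℚ) * (b.choose k : RatFunc ℚ) *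
          A ^ ((m : ℤ) + a + b + c - 2 * ((i : ℤ) + j + k)) * δ ^ ((m : ℤ) - i + j + k - 2)
      = A ^ (3 * (m : ℤ) + a + b + c) * δ ^ (-2 : ℤ) * F a * F b := by
  have hAe : ∀ (i j k : ℕ), A ^ ((m:ℤ)+a+b+c - 2*((i:ℤ)+j+k))
      = A^((m:ℤ)+a+b+c) * (A^(-2:ℤ))^i * (A^(-2:ℤ))^j * (A^(-2:ℤ))^k := by
    intro i j k
    rw [← zpow_natCast (A^(-2:ℤ)) i, ← zpow_natCast (A^(-2:ℤ)) j,
      ← zpow_natCast (A^(-2:ℤ)) k, ← zpow_mul, ← zpow_mul, ← zpow_mul,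
      ← zpow_add₀ hA, ← zpow_add₀ hA, ← zpow_add₀ hA]
    congr 1
    ring
  have hde : ∀ i j k : ℕ, i ≤ m → δ ^ ((m:ℤ)-i+j+k-2)
      = δ^(m-i) * δ^j * δ^k * δ^(-2:ℤ) := by
    intro i j k him
    rw [← zpow_natCast δ (m-i), ← zpow_natCast δ j, ← zpow_natCast δ k,
      ← zpow_add₀ hδ, ← zpow_add₀ hδ, ← zpow_add₀ hδ]
    congr 1
    push_cast [Nat.cast_sub him]
    ring
  calc ∑ i ∈ Finset.range (m + 1), ∑ j ∈ Finset.Icc 1 a, ∑ k ∈ Finset.Icc 1 b,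
        (m.choose i : RatFunc ℚ) * (a.choose j : RatFunc ℚ) * (b.choose k : RatFunc ℚ) *
          A ^ ((m : ℤ) + a + b + c - 2 * ((i : ℤ) + j + k)) * δ ^ ((m : ℤ) - i + j + k - 2)
      = ∑ i ∈ Finset.range (m + 1), ∑ j ∈ Finset.Icc 1 a, ∑ k ∈ Finset.Icc 1 b,
          (A^((m:ℤ)+a+b+c) * δ^(-2:ℤ))
            * (((m.choose i : RatFunc ℚ) * (A^(-2:ℤ))^i * δ^(m-i))
            * (((a.choose j : RatFunc ℚ) * (A^(-2:ℤ)*δ)^j)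
            * ((b.choose k : RatFunc ℚ) * (A^(-2:ℤ)*δ)^k))) := by
        refine Finset.sum_congr rfl fun i hi => Finset.sum_congr rfl fun j _ =>
          Finset.sum_congr rfl fun k _ => ?_
        rw [hAe i j k, hde i j k (Nat.lt_succ_iff.mp (Finset.mem_range.mp hi))]
        ring
    _ = (A^((m:ℤ)+a+b+c) * δ^(-2:ℤ))
          * (∑ i ∈ Finset.range (m+1), (m.choose i : RatFunc ℚ) * (A^(-2:ℤ))^i * δ^(m-i))
          * (∑ j ∈ Finset.Icc 1 a, (a.choose j : RatFunc ℚ) * (A^(-2:ℤ)*δ)^j)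
          * (∑ k ∈ Finset.Icc 1 b, (b.choose k : RatFunc ℚ) * (A^(-2:ℤ)*δ)^k) := by
        simp only [← Finset.mul_sum, ← Finset.sum_mul]
        ring
    _ = A ^ (3 * (m : ℤ) + a + b + c) * δ ^ (-2 : ℤ) * F a * F b := by
        rw [sumf m hm, sumg a, sumg b]
        have h3 : A^((m:ℤ)+a+b+c) * A^(2*m) = A^(3*(m:ℤ)+a+b+c) := by
          rw [← zpow_natCast A (2*m), ← zpow_add₀ hA]
          congr 1
          push_cast
          ring
        rw [← h3]
        ring
end

section
/- Let a, b, c be positive integers and m a non-negative even integer. Then the sum of the three triple sums ∑_{i=0}^{m} ∑_{j=1}^{a} ∑_{k=1}^{b} C(m,i)·C(a,j)·C(b,k) · A^{m+a+b+c-2(i+j+k)} · δ^{m-i+j+k-2}, ∑_{i=0}^{m} ∑_{k=1}^{b} ∑_{l=1}^{c} C(m,i)·C(b,k)·C(c,l) · A^{m+a+b+c-2(i+k+l)} · δ^{m-i+k+l-2}, and ∑_{i=0}^{m} ∑_{j=1}^{a} ∑_{l=1}^{c} C(m,i)·C(a,j)·C(c,l) · A^{m+a+b+c-2(i+j+l)}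 · δ^{m-i+j+l-2} equals A^{3m+a+b+c} · δ⁻² · (F_a·F_b + F_b·F_c + F_c·F_a) in the field ℚ(A), where C(n,r) denotes the binomial coefficient. -/
lemma h4 : A ^ 4 + 1 ≠ 0 := by
  have : (Polynomial.X ^ 4 + 1 : Polynomial ℚ) ≠ 0 := by
    intro h
    have := congrArg (Polynomial.coeff · 0) h
    simp at this
  simpa [A, RatFunc.algebraMap_X, map_add, map_pow, map_one] using
    (RatFunc.algebraMap_ne_zero this)

lemma h2 : A ^ (-2 : ℤ) * A ^ 2 = 1 := by
  rw [show (A:RatFunc ℚ)^2 = A ^ (2:ℤ) by norm_cast, ← zpow_add₀ hA]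
  norm_num

lemma key1 : A ^ (-2 : ℤ) + δ = -A ^ 2 := by unfold δ; ring

lemma key2 : (1 : RatFunc ℚ) + A ^ (-2 : ℤ) * δ = -A ^ (-4 : ℤ) := by
  unfold δ
  have h4' : A ^ (-2:ℤ) * A ^ (-2:ℤ) = A ^ (-4:ℤ) := by
    rw [← zpow_add₀ hA]; norm_num
  linear_combination -h2 - h4'

lemma sumj (p : ℕ) :
    ∑ j ∈ Finset.Icc 1 p, (p.choose j : RatFunc ℚ) * (A ^ (-2:ℤ) * δ) ^ j = F p := by
  have hins : Finset.range (p+1) = insert 0 (Finset.Icc 1 p) := by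
    ext x; simp only [Finset.mem_range, Finset.mem_insert, Finset.mem_Icc]; omega
  have hpow : ((1:RatFunc ℚ) + A ^ (-2:ℤ) * δ) ^ p
      = ∑ j ∈ Finset.range (p+1), (p.choose j : RatFunc ℚ) * (A ^ (-2:ℤ) * δ) ^ j := by
    rw [add_comm, add_pow]
    exact Finset.sum_congr rfl fun j _ => by ring
  have hF : F p = (1 + A ^ (-2:ℤ) * δ) ^ p - 1 := by
    rw [F, key2, zpow_natCast]
  rw [hF, hpow, hins, Finset.sum_insert (by simp)]
  simp

lemma sumi (m : ℕ) (hm : Even m) :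
    ∑ i ∈ Finset.range (m+1),
        (m.choose i : RatFunc ℚ) * (A ^ (-2:ℤ)) ^ i * δ ^ ((m:ℤ) - i) = A ^ (2 * (m:ℤ)) := by
  have step : ∀ i ∈ Finset.range (m+1),
      (m.choose i : RatFunc ℚ) * (A ^ (-2:ℤ)) ^ i * δ ^ ((m:ℤ) - i)
      = (A ^ (-2:ℤ)) ^ i * δ ^ (m - i) * (m.choose i) := by
    intro i hi
    simp only [Finset.mem_range] at hi
    have : ((m:ℤ) - i) = ((m - i : ℕ) : ℤ) := by omega
    rw [this, zpow_natCast]; ring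
  rw [Finset.sum_congr rfl step, ← add_pow, key1, hm.neg_pow, ← pow_mul,
    show 2 * (m:ℤ) = ((2 * m : ℕ) : ℤ) by push_cast; ring, zpow_natCast]

lemma tri (m p q : ℕ) (hm : Even m) (t : ℤ) :
    (∑ i ∈ Finset.range (m + 1), ∑ j ∈ Finset.Icc 1 p, ∑ k ∈ Finset.Icc 1 q,
        (m.choose i : RatFunc ℚ) * (p.choose j : RatFunc ℚ) * (q.choose k : RatFunc ℚ) *
          A ^ (t - 2 * ((i : ℤ) + j + k)) * δ ^ ((m : ℤ) - i + j + k - 2))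
      = A ^ (t + 2 * m) * δ ^ (-2 : ℤ) * (F p * F q) := by
  have expand : ∀ i j k : ℕ,
      A ^ (t - 2 * ((i : ℤ) + j + k)) * δ ^ ((m : ℤ) - i + j + k - 2)
      = (A ^ t * δ ^ (-2:ℤ)) * ((A ^ (-2:ℤ)) ^ i * δ ^ ((m:ℤ) - i))
          * ((A ^ (-2:ℤ) * δ) ^ j) * ((A ^ (-2:ℤ) * δ) ^ k) := by
    intro i j k
    rw [show t - 2 * ((i:ℤ) + j + k) = t + (-2) * i + ((-2) * j + (-2) * k) by ring,
        show (m:ℤ) - i + j + k - 2 = (-2) + (((m:ℤ) - i) + ((j:ℤ) + (k:ℤ))) by ring,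
        zpow_add₀ hA, zpow_add₀ hA, zpow_add₀ hA, zpow_add₀ hδ, zpow_add₀ hδ, zpow_add₀ hδ,
        zpow_mul A (-2) (i:ℤ), zpow_mul A (-2) (j:ℤ), zpow_mul A (-2) (k:ℤ),
        zpow_natCast, zpow_natCast, zpow_natCast, zpow_natCast (δ) j, zpow_natCast (δ) k,
        mul_pow, mul_pow]
    ring
  calc (∑ i ∈ Finset.range (m + 1), ∑ j ∈ Finset.Icc 1 p, ∑ k ∈ Finset.Icc 1 q,
        (m.choose i : RatFunc ℚ) * (p.choose j : RatFunc ℚ) * (q.choose k : RatFunc ℚ) *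
          A ^ (t - 2 * ((i : ℤ) + j + k)) * δ ^ ((m : ℤ) - i + j + k - 2))
      = (A ^ t * δ ^ (-2:ℤ)) *
          ((∑ i ∈ Finset.range (m + 1), (m.choose i : RatFunc ℚ) * (A ^ (-2:ℤ)) ^ i * δ ^ ((m:ℤ) - i)) *
           ((∑ j ∈ Finset.Icc 1 p, (p.choose j : RatFunc ℚ) * (A ^ (-2:ℤ) * δ) ^ j) *
            (∑ k ∈ Finset.Icc 1 q, (q.choose k : RatFunc ℚ) * (A ^ (-2:ℤ) * δ) ^ k))) := by
        conv_rhs => rw [Finset.sum_mul_sum, Finset.sum_mul_sum]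
        conv_rhs => simp only [Finset.mul_sum]
        refine Finset.sum_congr rfl fun i _ => Finset.sum_congr rfl fun j _ =>
          Finset.sum_congr rfl fun k _ => ?_
        linear_combination ((m.choose i : RatFunc ℚ) * (p.choose j) * (q.choose k)) * expand i j k
    _ = A ^ (t + 2 * m) * δ ^ (-2 : ℤ) * (F p * F q) := by
        rw [sumi m hm, sumj p, sumj q, zpow_add₀ hA]; ring

theorem X2_contribution (a b c : ℕ) (ha : 0 < a) (hb : 0 < b) (hc : 0 < c)
    (m : ℕ) (hm : Even m) :
    (∑ i ∈ Finset.range (m + 1), ∑ j ∈ Finset.Icc 1 a, ∑ k ∈ Finset.Icc 1 b,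
        (m.choose i : RatFunc ℚ) * (a.choose j : RatFunc ℚ) * (b.choose k : RatFunc ℚ) *
          A ^ ((m : ℤ) + a + b + c - 2 * ((i : ℤ) + j + k)) * δ ^ ((m : ℤ) - i + j + k - 2))
      + (∑ i ∈ Finset.range (m + 1), ∑ k ∈ Finset.Icc 1 b, ∑ l ∈ Finset.Icc 1 c,
        (m.choose i : RatFunc ℚ) * (b.choose k : RatFunc ℚ) * (c.choose l : RatFunc ℚ) *
          A ^ ((m : ℤ) + a + b + c - 2 * ((i : ℤ) + k + l)) * δ ^ ((m : ℤ) - i + k + l - 2))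
      + (∑ i ∈ Finset.range (m + 1), ∑ j ∈ Finset.Icc 1 a, ∑ l ∈ Finset.Icc 1 c,
        (m.choose i : RatFunc ℚ) * (a.choose j : RatFunc ℚ) * (c.choose l : RatFunc ℚ) *
          A ^ ((m : ℤ) + a + b + c - 2 * ((i : ℤ) + j + l)) * δ ^ ((m : ℤ) - i + j + l - 2))
      = A ^ (3 * (m : ℤ) + a + b + c) * δ ^ (-2 : ℤ) * (F a * F b + F b * F c + F c * F a) := by
  rw [tri m a b hm ((m:ℤ) + a + b + c), tri m b c hm ((m:ℤ) + a + b + c),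
    tri m a c hm ((m:ℤ) + a + b + c),
    show (m:ℤ) + a + b + c + 2 * m = 3 * (m:ℤ) + a + b + c by ring]
  ring
end

section
/- Let a, b, c be positive integers and m a non-negative even integer. Then in the field ℚ(A), the sum ∑_{i=0}^{m-1} ∑_{j=1}^{a} ∑_{k=1}^{b} ∑_{l=1}^{c} C(m,i)·C(a,j)·C(b,k)·C(c,l) · A^{m+a+b+c-2(i+j+k+l)} · δ^{m-i+j+k+l-4} + ∑_{j=1}^{a} ∑_{k=1}^{b} ∑_{l=1}^{c} C(a,j)·C(b,k)·C(c,l) · A^{m+a+b+c-2(m+j+k+l)} · δ^{j+k+l-2} equals A^{3m+a+b+c} · δ⁻⁴ · (F_a·F_b·F_c + (δ² - 1)·A^{-4m}·F_a·F_b·F_c), where C(n,r) denotes the binomial coefficient. -/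
lemma e2 : A ^ (-2:ℤ) = (A^2)⁻¹ := by
  rw [show (-2:ℤ) = -((2:ℕ):ℤ) by norm_num, zpow_neg, zpow_natCast]
lemma e3 : A ^ (-3:ℤ) = (A^3)⁻¹ := by
  rw [show (-3:ℤ) = -((3:ℕ):ℤ) by norm_num, zpow_neg, zpow_natCast]
lemma e4 : A ^ (-4:ℤ) = (A^4)⁻¹ := by
  rw [show (-4:ℤ) = -((4:ℕ):ℤ) by norm_num, zpow_neg, zpow_natCast]

lemma sum_Icc_eq (n : ℕ) (f : ℕ → RatFunc ℚ) :
    ∑ j ∈ Finset.Icc 1 n, f j = (∑ j ∈ Finset.range (n+1), f j) - f 0 := by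
  rw [Finset.sum_range_succ' f n, ← Finset.Ico_add_one_right_eq_Icc, Finset.sum_Ico_eq_sum_range]
  simp [add_comm]

lemma binomA (n : ℕ) :
    ∑ j ∈ Finset.Icc 1 n, (n.choose j : RatFunc ℚ) * A ^ ((n:ℤ) - 2*j) * δ ^ (j:ℤ)
      = A ^ (n:ℤ) * F n := by
  have hbase : A⁻¹ * δ + A = -(A ^ (-3:ℤ)) := by
    rw [δ, e2, e3]
    field_simp [hA]
    ring
  have full : ∑ j ∈ Finset.range (n+1),
      (n.choose j : RatFunc ℚ) * A ^ ((n:ℤ) - 2*j) * δ ^ (j:ℤ) = (A⁻¹ * δ + A)^n := by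
    rw [add_pow]
    apply Finset.sum_congr rfl
    intro j hj
    have hjn : j ≤ n := Nat.lt_succ_iff.mp (Finset.mem_range.mp hj)
    have he : ((n:ℤ) - 2*j) = ((n - j : ℕ) : ℤ) + (-(j:ℤ)) := by
      rw [Nat.cast_sub hjn]; ring
    rw [he, zpow_add₀ hA, zpow_natCast, zpow_neg, zpow_natCast, zpow_natCast, mul_pow, inv_pow]
    ring
  rw [sum_Icc_eq n (fun j => (n.choose j : RatFunc ℚ) * A ^ ((n:ℤ) - 2*j) * δ ^ (j:ℤ)), full,
    hbase, F]
  have hb2 : -(A ^ (-3:ℤ)) = A * (-A ^ (-4:ℤ)) := by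
    rw [show (-3:ℤ) = 1 + -4 by norm_num, zpow_add₀ hA, zpow_one]
    ring
  rw [hb2, mul_pow, zpow_natCast (-A ^ (-4:ℤ)) n, zpow_natCast]
  simp
  ring

lemma binomM (m : ℕ) (hm : Even m) :
    ∑ i ∈ Finset.range m, (m.choose i : RatFunc ℚ) * A ^ ((m:ℤ) - 2*i) * δ ^ ((m:ℤ) - i)
      = A ^ (3*(m:ℤ)) - A ^ (-(m:ℤ)) := by
  have hbase : A⁻¹ + A * δ = -A ^ 3 := by
    rw [δ, e2]
    field_simp [hA]
    ring
  have full : ∑ i ∈ Finset.range (m+1),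
      (m.choose i : RatFunc ℚ) * A ^ ((m:ℤ) - 2*i) * δ ^ ((m:ℤ) - i) = (A⁻¹ + A * δ)^m := by
    rw [add_pow]
    apply Finset.sum_congr rfl
    intro i hi
    have him : i ≤ m := Nat.lt_succ_iff.mp (Finset.mem_range.mp hi)
    have he : ((m:ℤ) - 2*i) = (-(i:ℤ)) + (((m - i : ℕ) : ℤ)) := by
      rw [Nat.cast_sub him]; ring
    have hd : ((m:ℤ) - i) = ((m - i : ℕ) : ℤ) := by rw [Nat.cast_sub him]
    rw [he, hd, zpow_add₀ hA, zpow_natCast, zpow_neg, zpow_natCast, zpow_natCast, mul_pow, inv_pow]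
    ring
  have hsplit := Finset.sum_range_succ
    (fun i => (m.choose i : RatFunc ℚ) * A ^ ((m:ℤ) - 2*i) * δ ^ ((m:ℤ) - i)) m
  rw [full] at hsplit
  have hlast : (m.choose m : RatFunc ℚ) * A ^ ((m:ℤ) - 2*m) * δ ^ ((m:ℤ) - m) = A ^ (-(m:ℤ)) := by
    simp [Nat.choose_self]
    rw [show ((m:ℤ) - 2*m) = -(m:ℤ) by ring, zpow_neg, zpow_natCast]
  have hpow : (A⁻¹ + A * δ)^m = A ^ (3*(m:ℤ)) := by
    rw [hbase, hm.neg_pow, ← pow_mul, ← zpow_natCast A (3*m)]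
    norm_num [mul_comm]
  rw [hpow, hlast] at hsplit
  linear_combination -hsplit

theorem X3_contribution (a b c : ℕ) (ha : 0 < a) (hb : 0 < b) (hc : 0 < c)
    (m : ℕ) (hm : Even m) :
    (∑ i ∈ Finset.range m, ∑ j ∈ Finset.Icc 1 a, ∑ k ∈ Finset.Icc 1 b, ∑ l ∈ Finset.Icc 1 c,
        (m.choose i : RatFunc ℚ) * (a.choose j : RatFunc ℚ) * (b.choose k : RatFunc ℚ) *
          (c.choose l : RatFunc ℚ) *
          A ^ ((m : ℤ) + a + b + c - 2 * ((i : ℤ) + j + k + l)) *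
          δ ^ ((m : ℤ) - i + j + k + l - 4))
      + (∑ j ∈ Finset.Icc 1 a, ∑ k ∈ Finset.Icc 1 b, ∑ l ∈ Finset.Icc 1 c,
        (a.choose j : RatFunc ℚ) * (b.choose k : RatFunc ℚ) * (c.choose l : RatFunc ℚ) *
          A ^ ((m : ℤ) + a + b + c - 2 * ((m : ℤ) + j + k + l)) * δ ^ ((j : ℤ) + k + l - 2))
      = A ^ (3 * (m : ℤ) + a + b + c) * δ ^ (-4 : ℤ) *
          (F a * F b * F c + (δ ^ 2 - 1) * A ^ (-4 * (m : ℤ)) * (F a * F b * F c)) := by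
  have S1 : (∑ i ∈ Finset.range m, ∑ j ∈ Finset.Icc 1 a, ∑ k ∈ Finset.Icc 1 b,
        ∑ l ∈ Finset.Icc 1 c,
        (m.choose i : RatFunc ℚ) * (a.choose j : RatFunc ℚ) * (b.choose k : RatFunc ℚ) *
          (c.choose l : RatFunc ℚ) *
          A ^ ((m : ℤ) + a + b + c - 2 * ((i : ℤ) + j + k + l)) *
          δ ^ ((m : ℤ) - i + j + k + l - 4))
      = (∑ i ∈ Finset.range m, (m.choose i : RatFunc ℚ) * A ^ ((m:ℤ) - 2*i) * δ ^ ((m:ℤ) - i))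
        * (∑ j ∈ Finset.Icc 1 a, (a.choose j : RatFunc ℚ) * A ^ ((a:ℤ) - 2*j) * δ ^ (j:ℤ))
        * (∑ k ∈ Finset.Icc 1 b, (b.choose k : RatFunc ℚ) * A ^ ((b:ℤ) - 2*k) * δ ^ (k:ℤ))
        * (∑ l ∈ Finset.Icc 1 c, (c.choose l : RatFunc ℚ) * A ^ ((c:ℤ) - 2*l) * δ ^ (l:ℤ))
        * δ ^ (-4:ℤ) := by
    have T1 : ∀ i j k l : ℕ,
        (m.choose i : RatFunc ℚ) * (a.choose j : RatFunc ℚ) * (b.choose k : RatFunc ℚ) *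
          (c.choose l : RatFunc ℚ) *
          A ^ ((m : ℤ) + a + b + c - 2 * ((i : ℤ) + j + k + l)) *
          δ ^ ((m : ℤ) - i + j + k + l - 4)
        = ((m.choose i : RatFunc ℚ) * A ^ ((m:ℤ) - 2*i) * δ ^ ((m:ℤ) - i))
          * (((a.choose j : RatFunc ℚ) * A ^ ((a:ℤ) - 2*j) * δ ^ (j:ℤ))
          * (((b.choose k : RatFunc ℚ) * A ^ ((b:ℤ) - 2*k) * δ ^ (k:ℤ))
          * (((c.choose l : RatFunc ℚ) * A ^ ((c:ℤ) - 2*l) * δ ^ (l:ℤ))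
          * δ ^ (-4:ℤ)))) := by
      intro i j k l
      rw [show ((m:ℤ)+a+b+c-2*((i:ℤ)+j+k+l))
          = ((m:ℤ)-2*i)+(((a:ℤ)-2*j)+(((b:ℤ)-2*k)+((c:ℤ)-2*l))) by ring,
          show ((m:ℤ)-i+j+k+l-4) = ((m:ℤ)-i)+((j:ℤ)+((k:ℤ)+((l:ℤ)+(-4)))) by ring]
      simp only [zpow_add₀ hA, zpow_add₀ hδ]
      ring
    simp only [T1, ← Finset.mul_sum, ← Finset.sum_mul]
    ring
  have S2 : (∑ j ∈ Finset.Icc 1 a, ∑ k ∈ Finset.Icc 1 b, ∑ l ∈ Finset.Icc 1 c,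
        (a.choose j : RatFunc ℚ) * (b.choose k : RatFunc ℚ) * (c.choose l : RatFunc ℚ) *
          A ^ ((m : ℤ) + a + b + c - 2 * ((m : ℤ) + j + k + l)) * δ ^ ((j : ℤ) + k + l - 2))
      = A ^ (-(m:ℤ))
        * (∑ j ∈ Finset.Icc 1 a, (a.choose j : RatFunc ℚ) * A ^ ((a:ℤ) - 2*j) * δ ^ (j:ℤ))
        * (∑ k ∈ Finset.Icc 1 b, (b.choose k : RatFunc ℚ) * A ^ ((b:ℤ) - 2*k) * δ ^ (k:ℤ))
        * (∑ l ∈ Finset.Icc 1 c, (c.choose l : RatFunc ℚ) * A ^ ((c:ℤ) - 2*l) * δ ^ (l:ℤ))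
        * δ ^ (-2:ℤ) := by
    have T2 : ∀ j k l : ℕ,
        (a.choose j : RatFunc ℚ) * (b.choose k : RatFunc ℚ) * (c.choose l : RatFunc ℚ) *
          A ^ ((m : ℤ) + a + b + c - 2 * ((m : ℤ) + j + k + l)) * δ ^ ((j : ℤ) + k + l - 2)
        = ((a.choose j : RatFunc ℚ) * A ^ ((a:ℤ) - 2*j) * δ ^ (j:ℤ))
          * (((b.choose k : RatFunc ℚ) * A ^ ((b:ℤ) - 2*k) * δ ^ (k:ℤ))
          * (((c.choose l : RatFunc ℚ) * A ^ ((c:ℤ) - 2*l) * δ ^ (l:ℤ))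
          * (A ^ (-(m:ℤ)) * δ ^ (-2:ℤ)))) := by
      intro j k l
      rw [show ((m:ℤ)+a+b+c-2*((m:ℤ)+j+k+l))
          = (-(m:ℤ))+(((a:ℤ)-2*j)+(((b:ℤ)-2*k)+((c:ℤ)-2*l))) by ring,
          show ((j:ℤ)+k+l-2) = (j:ℤ)+((k:ℤ)+((l:ℤ)+(-2))) by ring]
      simp only [zpow_add₀ hA, zpow_add₀ hδ]
      ring
    simp only [T2, ← Finset.mul_sum, ← Finset.sum_mul]
    ring
  rw [S1, S2, binomM m hm, binomA a, binomA b, binomA c]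
  rw [show (3*(m:ℤ)+a+b+c) = 3*(m:ℤ)+((a:ℤ)+((b:ℤ)+(c:ℤ))) by ring,
      show (-4*(m:ℤ)) = -(m:ℤ) + -(3*(m:ℤ)) by ring,
      show ((-2):ℤ) = -4 + ((2:ℕ):ℤ) by norm_num]
  simp only [zpow_add₀ hA, zpow_add₀ hδ, zpow_natCast]
  rw [zpow_neg A (3*(m:ℤ))]
  have hu : A ^ (3*(m:ℤ)) * (A ^ (3*(m:ℤ)))⁻¹ = 1 := mul_inv_cancel₀ (zpow_ne_zero _ hA)
  linear_combination (-(δ^2-1) * A^(-(m:ℤ)) * ((A:RatFunc ℚ)^a*A^b*A^c) *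
    (F (a:ℤ) * F (b:ℤ) * F (c:ℤ)) * δ^(-4:ℤ)) * hu
end
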